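/- arXiv:1907.04931 — 2 statements merged into one kernel-verified Lean document; each statement's English description precedes it below -/
import Mathlib

section
/- Let (Ω, P) be a probability space, let V be a nonempty finite set (of nodes), let S ⊆ Ω be a measurable event ("node v is sampled") with P(S) = p_v > 0, and for each u ∈ V let T_u ⊆ S be a measurable event ("edge (u,v) is sampled") with P(T_u) = p_{u,v} > 0. Let f be a positive integer, and for each u ∈ V let A_u ∈ ℝ be a scalar (the normalized adjacency weight Ã_{v,u}) and x_u ∈ ℝ^f a vector (the transformed feature). Define the aggregator normalization α_{u,v} = p_{u,v} / p_v. Then the conditional expectation given S of the random vector Σ_{u ∈ V} (A_u / α_{u,v}) · 1_{T_u} · x_u equals Σ_{u ∈ V} A_u · x_u; i.e., the aggregator-normalized subgraph aggregation is an unbiased estimator of the full-graph aggregation. -/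
/-! Given `S`, the indicator of `T u ⊆ S` has mean `P (T u) / P S = α_{u,v}`, so dividing by
`α_{u,v}` makes each summand an unbiased estimate of `A u • x u`; linearity of the integral
finishes the proof. -/

open MeasureTheory ProbabilityTheory

section

variable {Ω E : Type*} [MeasurableSpace Ω] [NormedAddCommGroup E] [NormedSpace ℝ E]
  [CompleteSpace E]

theorem integral_div_measureReal_smul_indicator_smul {μ : Measure Ω} {t : Set Ω}
    (ht : MeasurableSet t) (hμt : μ.real t ≠ 0) (a : ℝ) (x : E) :
    ∫ ω, (a / μ.real t) • (t.indicator (fun _ => (1 : ℝ)) ω) • x ∂μ = a • x := by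
  simp_rw [← Set.indicator_smul_const_apply, one_smul]
  rw [integral_smul, integral_indicator_const x ht, smul_smul, div_mul_cancel₀ a hμt]

end

theorem cond_real_apply_of_subset {Ω : Type*} [MeasurableSpace Ω] (μ : Measure Ω) {s t : Set Ω}
    (ht : MeasurableSet t) (hts : t ⊆ s) : (μ[|s]).real t = μ.real t / μ.real s := by
  rw [measureReal_def, cond_apply' ht, Set.inter_eq_self_of_subset_right hts,
    ENNReal.toReal_mul, ENNReal.toReal_inv, div_eq_inv_mul, measureReal_def, measureReal_def]

theorem aggregator_normalization_unbiased_general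
    {Ω : Type*} [MeasurableSpace Ω] (P : Measure Ω)
    {V : Type*} [Fintype V]
    (S : Set Ω)
    (T : V → Set Ω) (hTmeas : ∀ u, MeasurableSet (T u)) (hTS : ∀ u, T u ⊆ S)
    (pv : ℝ) (hpv : 0 < pv) (hPS : P S = ENNReal.ofReal pv)
    (p : V → ℝ) (hp : ∀ u, 0 < p u) (hPT : ∀ u, P (T u) = ENNReal.ofReal (p u))
    (f : ℕ)
    (A : V → ℝ) (x : V → EuclideanSpace ℝ (Fin f)) :
    ∫ ω, (∑ u, (A u / (p u / pv)) • ((T u).indicator (fun _ => (1 : ℝ)) ω) • x u) ∂(P[|S])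
      = ∑ u, A u • x u := by
  have hα : ∀ u, (P[|S]).real (T u) = p u / pv := fun u => by
    rw [cond_real_apply_of_subset P (hTmeas u) (hTS u), measureReal_def, measureReal_def, hPT, hPS,
      ENNReal.toReal_ofReal (hp u).le, ENNReal.toReal_ofReal hpv.le]
  rw [integral_finsetSum]
  · refine Finset.sum_congr rfl fun u _ => ?_
    rw [← hα u]
    exact integral_div_measureReal_smul_indicator_smul (hTmeas u)
      (by rw [hα u]; exact (div_pos (hp u) hpv).ne') (A u) (x u)
  · intro u _
    exact Integrable.smul (A u / (p u / pv))
      (((integrable_const (1 : ℝ)).indicator (hTmeas u)).smul_const (x u))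

/-- Proposition 1 (aggregator normalization): conditioned on node `v` being sampled
(event `S`), the subgraph aggregation normalized by `α_{u,v} = p_{u,v} / p_v` is an
unbiased estimator of the full-graph aggregation `∑ u, A u • x u`. -/
theorem aggregator_normalization_unbiased
    {Ω : Type*} [MeasurableSpace Ω] (P : Measure Ω) [IsProbabilityMeasure P]
    {V : Type*} [Fintype V] [Nonempty V]
    (S : Set Ω) (hSmeas : MeasurableSet S)
    (T : V → Set Ω) (hTmeas : ∀ u, MeasurableSet (T u)) (hTS : ∀ u, T u ⊆ S)
    (pv : ℝ) (hpv : 0 < pv) (hPS : P S = ENNReal.ofReal pv)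
    (p : V → ℝ) (hp : ∀ u, 0 < p u) (hPT : ∀ u, P (T u) = ENNReal.ofReal (p u))
    (f : ℕ) (hf : 0 < f)
    (A : V → ℝ) (x : V → EuclideanSpace ℝ (Fin f)) :
    ∫ ω, (∑ u, (A u / (p u / pv)) • ((T u).indicator (fun _ => (1 : ℝ)) ω) • x u) ∂(P[|S])
      = ∑ u, A u • x u :=
  aggregator_normalization_unbiased_general P S T hTmeas hTS pv hpv hPS p hp hPT f A x
end

section
/- Let (Ω, P) be a probability space, let E be a nonempty finite set, let L and n be positive integers, and for each ℓ ∈ {1,…,L} and e ∈ E let b_e^(ℓ) ∈ ℝ^n be a fixed vector; set B_e = Σ_{ℓ=1}^{L} b_e^(ℓ) and assume B_e ≠ 0 for all e ∈ E. Let m > 0 and define p*_e = m · ‖B_e‖ / (Σ_{e' ∈ E} ‖B_{e'}‖); assume p*_e ≤ 1 for all e. Let (X_e)_{e ∈ E} be an independent family of {0,1}-valued random variables with E[X_e] = p*_e, and let (Y_e)_{e ∈ E} be an independent family of {0,1}-valued random variables with E[Y_e] = p_e, where 0 < p_e ≤ 1 and Σ_{e ∈ E} p_e = m. Define for each coordinate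 i the random variables ζ*_i = Σ_{ℓ} Σ_{e} (b_{e,i}^(ℓ) / p*_e) X_e and ζ_i = Σ_{ℓ} Σ_{e} (b_{e,i}^(ℓ) / p_e) Y_e. Then Σ_{i=1}^{n} Var(ζ*_i) ≤ Σ_{i=1}^{n} Var(ζ_i); i.e., under independent edge sampling with expected number of sampled edges equal to m, the edge probabilities p_e = (m / Σ_{e'} ‖Σ_ℓ b_{e'}^(ℓ)‖) · ‖Σ_ℓ b_e^(ℓ)‖ minimize the sum of the variances of the coordinates of the estimator ζ. -/
/-!
Since the same indicator `Z_e` serves every layer, coordinate `i` of the estimator is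
`∑_e (B_{e,i} / q_e) Z_e`, and independence makes its variance `∑_e B_{e,i}² (1 - q_e) / q_e`.
Summing over the coordinates, the total variance is `∑_e ‖B_e‖² / q_e - ∑_e ‖B_e‖²`.
Only the first sum depends on the sampler. By Sedrakyan's form of Cauchy–Schwarz it is at least
`(∑_e ‖B_e‖)² / m` whenever `∑_e q_e = m`, and the proportional choice `q = p*` attains this bound.
-/

open MeasureTheory ProbabilityTheory Finset

section Indicator

variable {Ω : Type*} [MeasurableSpace Ω] {P : Measure Ω} {Z : Ω → ℝ}

lemma memLp_two_of_zero_or_one [IsFiniteMeasure P] (hZ : Measurable Z)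
    (h01 : ∀ ω, Z ω = 0 ∨ Z ω = 1) : MemLp Z 2 P :=
  have hbound : ∀ ω, ‖Z ω‖ ≤ 1 := fun ω => by rcases h01 ω with h | h <;> simp [h]
  (memLp_top_of_bound hZ.aestronglyMeasurable 1 (ae_of_all _ hbound)).mono_exponent le_top

lemma variance_of_zero_or_one [IsProbabilityMeasure P] (hZ : Measurable Z)
    (h01 : ∀ ω, Z ω = 0 ∨ Z ω = 1) : variance Z P = P[Z] - P[Z] ^ 2 := by
  have hsq : Z ^ 2 = Z := funext fun ω => by rcases h01 ω with h | h <;> simp [h]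
  rw [variance_eq_sub (memLp_two_of_zero_or_one hZ h01), hsq]

lemma variance_sum_const_mul_of_iIndepFun [IsProbabilityMeasure P] {ι : Type*} (s : Finset ι)
    {Z : ι → Ω → ℝ} (hZ : ∀ i, MemLp (Z i) 2 P) (hind : iIndepFun Z P) (a : ι → ℝ) :
    variance (fun ω => ∑ i ∈ s, a i * Z i ω) P = ∑ i ∈ s, a i ^ 2 * variance (Z i) P := by
  have hsum : (fun ω => ∑ i ∈ s, a i * Z i ω) = ∑ i ∈ s, fun ω => a i * Z i ω := by
    ext ω
    simp
  rw [hsum, IndepFun.variance_sum (fun i _ => (hZ i).const_mul (a i))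
    fun i _ j _ hij => (hind.indepFun hij).comp (measurable_const_mul _) (measurable_const_mul _)]
  exact sum_congr rfl fun i _ => variance_const_mul (a i) (Z i) P

end Indicator

section Estimator

variable {Ω Λ E κ : Type*} [Fintype Λ] [Fintype E]

lemma sum_layers_div_mul_eq (b : Λ → E → EuclideanSpace ℝ κ) (q : E → ℝ) (Z : E → Ω → ℝ)
    (i : κ) :
    (fun ω => ∑ ℓ, ∑ e, (b ℓ e i / q e) * Z e ω)
      = fun ω => ∑ e, ((∑ ℓ, b ℓ e) i / q e) * Z e ω := by
  ext ω
  rw [sum_comm]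
  refine sum_congr rfl fun e _ => ?_
  rw [WithLp.ofLp_sum, Finset.sum_apply, ← sum_mul, ← sum_div]

variable [Fintype κ]

lemma sum_sq_div_mul_sub_sq (x : EuclideanSpace ℝ κ) {q : ℝ} (hq : q ≠ 0) :
    ∑ i, (x i / q) ^ 2 * (q - q ^ 2) = ‖x‖ ^ 2 / q - ‖x‖ ^ 2 := by
  simp_rw [div_pow, ← sum_mul, ← sum_div, ← EuclideanSpace.real_norm_sq_eq]
  field_simp

variable [MeasurableSpace Ω] {P : Measure Ω}

lemma sum_variance_layers_eq [IsProbabilityMeasure P] (b : Λ → E → EuclideanSpace ℝ κ)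
    {q : E → ℝ} (hq : ∀ e, q e ≠ 0) {Z : E → Ω → ℝ} (hZ : ∀ e, Measurable (Z e))
    (h01 : ∀ e ω, Z e ω = 0 ∨ Z e ω = 1) (hind : iIndepFun Z P) (hmean : ∀ e, P[Z e] = q e) :
    ∑ i, variance (fun ω => ∑ ℓ, ∑ e, (b ℓ e i / q e) * Z e ω) P
      = ∑ e, ‖∑ ℓ, b ℓ e‖ ^ 2 / q e - ∑ e, ‖∑ ℓ, b ℓ e‖ ^ 2 := by
  have hvar : ∀ e, variance (Z e) P = q e - q e ^ 2 := fun e => by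
    rw [variance_of_zero_or_one (hZ e) (h01 e), hmean e]
  simp_rw [sum_layers_div_mul_eq b q Z, variance_sum_const_mul_of_iIndepFun _
    (fun e => memLp_two_of_zero_or_one (hZ e) (h01 e)) hind, hvar]
  rw [sum_comm, ← sum_sub_distrib]
  exact sum_congr rfl fun e _ => sum_sq_div_mul_sub_sq _ (hq e)

end Estimator

lemma sum_sq_div_proportional {E : Type*} (s : Finset E) (w : E → ℝ) (m : ℝ) :
    ∑ e ∈ s, w e ^ 2 / (m * w e / ∑ e' ∈ s, w e') = (∑ e ∈ s, w e) ^ 2 / m := by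
  have hterm : ∀ e ∈ s, w e ^ 2 / (m * w e / ∑ e' ∈ s, w e') = w e * (∑ e' ∈ s, w e') / m := by
    intro e _
    rcases eq_or_ne (w e) 0 with h | h
    · simp [h]
    rw [div_div_eq_mul_div, sq, mul_assoc, mul_comm m, mul_div_mul_left _ _ h]
  rw [sum_congr rfl hterm, ← sum_div, ← sum_mul, sq]

theorem optimal_edge_sampler_general
    {Ω : Type*} [MeasurableSpace Ω] (P : Measure Ω) [IsProbabilityMeasure P]
    {E : Type*} [Fintype E]
    (L n : ℕ)
    (b : Fin L → E → EuclideanSpace ℝ (Fin n))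
    (hB : ∀ e, (∑ ℓ : Fin L, b ℓ e) ≠ 0)
    (m : ℝ) (hm : 0 < m)
    (pstar : E → ℝ)
    (hpstar : ∀ e, pstar e = m * ‖∑ ℓ : Fin L, b ℓ e‖ / ∑ e', ‖∑ ℓ : Fin L, b ℓ e'‖)
    (X : E → Ω → ℝ) (hXmeas : ∀ e, Measurable (X e))
    (hX01 : ∀ e ω, X e ω = 0 ∨ X e ω = 1)
    (hXindep : iIndepFun X P)
    (hEX : ∀ e, ∫ ω, X e ω ∂P = pstar e)
    (p : E → ℝ) (hp0 : ∀ e, 0 < p e) (hpsum : ∑ e, p e = m)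
    (Y : E → Ω → ℝ) (hYmeas : ∀ e, Measurable (Y e))
    (hY01 : ∀ e ω, Y e ω = 0 ∨ Y e ω = 1)
    (hYindep : iIndepFun Y P)
    (hEY : ∀ e, ∫ ω, Y e ω ∂P = p e) :
    ∑ i : Fin n, variance (fun ω => ∑ ℓ : Fin L, ∑ e, (b ℓ e i / pstar e) * X e ω) P
      ≤ ∑ i : Fin n, variance (fun ω => ∑ ℓ : Fin L, ∑ e, (b ℓ e i / p e) * Y e ω) P := by
  set w : E → ℝ := fun e => ‖∑ ℓ, b ℓ e‖
  have hw : ∀ e, 0 < w e := fun e => norm_pos_iff.mpr (hB e)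
  have hpstar_pos : ∀ e, 0 < pstar e := fun e => by
    rw [hpstar e]
    exact div_pos (mul_pos hm (hw e)) ((hw e).trans_le (single_le_sum (fun e' _ => (hw e').le)
      (mem_univ e)))
  rw [sum_variance_layers_eq b (fun e => (hpstar_pos e).ne') hXmeas hX01 hXindep hEX,
    sum_variance_layers_eq b (fun e => (hp0 e).ne') hYmeas hY01 hYindep hEY]
  gcongr ?_ - _
  calc ∑ e, w e ^ 2 / pstar e = (∑ e, w e) ^ 2 / ∑ e, p e := by
        simp_rw [hpstar, hpsum]
        exact sum_sq_div_proportional univ w m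
    _ ≤ ∑ e, w e ^ 2 / p e := sq_sum_div_le_sum_sq_div univ w fun e _ => hp0 e

/-- Theorem 2 (optimal edge sampler): under independent edge sampling with expected
number of sampled edges `m`, the edge probabilities
`p*_e = m ⬝ ‖∑_ℓ b_e^(ℓ)‖ / ∑_{e'} ‖∑_ℓ b_{e'}^(ℓ)‖` minimize the sum of the
variances of the coordinates of the estimator `ζ`. -/
theorem optimal_edge_sampler
    {Ω : Type*} [MeasurableSpace Ω] (P : Measure Ω) [IsProbabilityMeasure P]
    {E : Type*} [Fintype E] [Nonempty E]
    (L n : ℕ) (hL : 0 < L) (hn : 0 < n)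
    (b : Fin L → E → EuclideanSpace ℝ (Fin n))
    (hB : ∀ e, (∑ ℓ : Fin L, b ℓ e) ≠ 0)
    (m : ℝ) (hm : 0 < m)
    (pstar : E → ℝ)
    (hpstar : ∀ e, pstar e = m * ‖∑ ℓ : Fin L, b ℓ e‖ / ∑ e', ‖∑ ℓ : Fin L, b ℓ e'‖)
    (hpstar1 : ∀ e, pstar e ≤ 1)
    (X : E → Ω → ℝ) (hXmeas : ∀ e, Measurable (X e))
    (hX01 : ∀ e ω, X e ω = 0 ∨ X e ω = 1)
    (hXindep : iIndepFun X P)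
    (hEX : ∀ e, ∫ ω, X e ω ∂P = pstar e)
    (p : E → ℝ) (hp0 : ∀ e, 0 < p e) (hp1 : ∀ e, p e ≤ 1) (hpsum : ∑ e, p e = m)
    (Y : E → Ω → ℝ) (hYmeas : ∀ e, Measurable (Y e))
    (hY01 : ∀ e ω, Y e ω = 0 ∨ Y e ω = 1)
    (hYindep : iIndepFun Y P)
    (hEY : ∀ e, ∫ ω, Y e ω ∂P = p e) :
    ∑ i : Fin n, variance (fun ω => ∑ ℓ : Fin L, ∑ e, (b ℓ e i / pstar e) * X e ω) P
      ≤ ∑ i : Fin n, variance (fun ω => ∑ ℓ : Fin L, ∑ e, (b ℓ e i / p e) * Y e ω) P :=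
  optimal_edge_sampler_general P L n b hB m hm pstar hpstar X hXmeas hX01 hXindep hEX p hp0 hpsum Y
    hYmeas hY01 hYindep hEY
end
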